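/- Let θ ∈ (0, π) be an irrational multiple of π. If a measurable subset A of the circle ℝ/2πℤ has measure zero complement relative to a full-measure union A = A₁ ∪ A₂ of two measurable sets, then at least one of A₁, A₂ contains two points whose angular difference is exactly θ. Equivalently: the circle cannot be partitioned up to measure zero into two measurable sets each avoiding angular distance θ, when θ/π is irrational. -/

import Mathlib

open MeasureTheory


lemma dense_zsmul {T : ℝ} (hT : 0 < T) {a : ℝ} (hirr : Irrational (a / T)) :
    DenseRange (fun n : ℤ => n • (a : AddCircle T)) := by
  have hrange : Set.range (fun n : ℤ => n • (a : AddCircle T))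
      = (AddSubgroup.zmultiples ((a : AddCircle T)) : Set (AddCircle T)) := by
    ext x
    simp [AddSubgroup.mem_zmultiples_iff]
  rw [DenseRange, hrange]
  set S := AddSubgroup.zmultiples ((a : AddCircle T))
  set H : AddSubgroup ℝ := S.comap (QuotientAddGroup.mk' (AddSubgroup.zmultiples T))
  rcases AddSubgroup.dense_or_cyclic H with hd | ⟨b, hb⟩
  · rw [← QuotientAddGroup.dense_preimage_mk (N := AddSubgroup.zmultiples T) (s := (S : Set _))]
    exact hd
  · exfalso
    have haH : a ∈ H := by
      simp only [H, AddSubgroup.mem_comap]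
      exact AddSubgroup.mem_zmultiples _
    have hTH : T ∈ H := by
      simp only [H, AddSubgroup.mem_comap]
      rw [QuotientAddGroup.mk'_apply]
      show ((T : ℝ) : AddCircle T) ∈ S
      rw [AddCircle.coe_period]; exact zero_mem S
    rw [hb] at haH hTH
    rw [← AddSubgroup.zmultiples_eq_closure] at haH hTH
    obtain ⟨m, hm⟩ := haH
    obtain ⟨n, hn⟩ := hTH
    have hb0 : b ≠ 0 := by
      rintro rfl
      simp at hn
      exact hT.ne' hn.symm
    have hn0 : (n : ℝ) ≠ 0 := by
      rintro h
      rw [← hn] at hT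
      simp only [Int.cast_eq_zero] at h
      simp [h] at hT
    have : a / T = (m : ℝ) / (n : ℝ) := by
      rw [← hm, ← hn]
      simp only [zsmul_eq_mul]
      field_simp
    rw [this] at hirr
    exact (Rat.not_irrational (m / n)) (by push_cast; exact hirr)

instance : Fact (0 < 2 * Real.pi) := ⟨by positivity⟩

/-- Let `θ ∈ (0, π)` be an irrational multiple of `π`. If the circle `ℝ/2πℤ` is
covered up to measure zero by two measurable sets `A₁, A₂`, then at least one of `A₁, A₂`
contains two points whose angular difference is exactly `θ`. -/
theorem one_class_contains_angular_distance (θ : ℝ) (hθ : θ ∈ Set.Ioo 0 Real.pi)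
    (hirr : Irrational (θ / Real.pi)) (A₁ A₂ : Set (AddCircle (2 * Real.pi)))
    (hA₁ : MeasurableSet A₁) (hA₂ : MeasurableSet A₂)
    (hfull : volume (A₁ ∪ A₂)ᶜ = 0) :
    (∃ x ∈ A₁, ∃ y ∈ A₁, x - y = (θ : AddCircle (2 * Real.pi))) ∨
      (∃ x ∈ A₂, ∃ y ∈ A₂, x - y = (θ : AddCircle (2 * Real.pi))) := by
  by_contra hcon
  push_neg at hcon
  obtain ⟨h₁, h₂⟩ := hcon
  set c : AddCircle (2 * Real.pi) := ((θ : ℝ) : AddCircle (2 * Real.pi)) with hc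
  -- helper : a conull set cannot avoid angular distance θ
  have key : ∀ (A : Set (AddCircle (2 * Real.pi))), volume Aᶜ = 0 →
      (∀ x ∈ A, ∀ y ∈ A, x - y ≠ c) → False := by
    intro A hAc hAav
    have hpre : volume ((fun x => x + c) ⁻¹' Aᶜ) = 0 := by
      rw [measure_preimage_add_right volume c Aᶜ]; exact hAc
    have hcompl : volume (A ∩ (fun x => x + c) ⁻¹' A)ᶜ = 0 := by
      rw [Set.compl_inter]
      refine le_antisymm ?_ (zero_le)
      refine le_trans (measure_union_le _ _) ?_
      rw [← Set.preimage_compl, hAc, hpre]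
      simp
    have hne : (A ∩ (fun x => x + c) ⁻¹' A).Nonempty := by
      rw [Set.nonempty_iff_ne_empty]
      rintro h
      rw [h, Set.compl_empty] at hcompl
      rw [AddCircle.measure_univ, ENNReal.ofReal_eq_zero] at hcompl
      have hTpos : (0:ℝ) < 2 * Real.pi := by positivity
      linarith
    obtain ⟨x, hxA, hxA2⟩ := hne
    exact hAav (x + c) hxA2 x hxA (add_sub_cancel_left x c)
  -- ergodicity of rotation by 2θ
  have h2θirr : Irrational ((2*θ) / (2 * Real.pi)) := by
    rw [mul_div_mul_left θ Real.pi (two_ne_zero)]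
    exact hirr
  have hdense : DenseRange (fun n : ℤ => n • ((2*θ : ℝ) : AddCircle (2 * Real.pi))) :=
    dense_zsmul (by positivity) h2θirr
  have herg : Ergodic
      (fun x : AddCircle (2 * Real.pi) => ((2*θ : ℝ) : AddCircle (2 * Real.pi)) +ᵥ x) volume :=
    ergodic_vadd_of_denseRange_zsmul hdense volume
  -- A₁ is a.e. invariant under rotation by 2θ
  set N : Set (AddCircle (2 * Real.pi)) := (A₁ ∪ A₂)ᶜ with hN
  have hNnull : volume N = 0 := hfull
  have hstep : ∀ᵐ x : AddCircle (2 * Real.pi) ∂volume,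
      x + c ∉ N ∧ x + c + c ∉ N := by
    have p1 : volume ((fun x => x + c) ⁻¹' N) = 0 := by
      rw [measure_preimage_add_right volume c N]; exact hNnull
    have p2 : volume ((fun x => x + c + c) ⁻¹' N) = 0 := by
      have he : (fun x : AddCircle (2 * Real.pi) => x + c + c) = (fun x => x + (c + c)) := by
        funext x; rw [add_assoc]
      rw [he, measure_preimage_add_right volume (c+c) N]; exact hNnull
    rw [MeasureTheory.ae_iff]
    have hsub : {x : AddCircle (2 * Real.pi) | ¬(x + c ∉ N ∧ x + c + c ∉ N)}
        ⊆ ((fun x => x + c) ⁻¹' N) ∪ ((fun x => x + c + c) ⁻¹' N) := by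
      intro x hx
      simp only [Set.mem_setOf_eq, not_and_or, not_not] at hx
      exact hx.imp (fun h => h) (fun h => h)
    refine le_antisymm (le_trans (measure_mono hsub) ?_) (zero_le)
    refine le_trans (measure_union_le _ _) ?_
    rw [p1, p2]; simp
  have hle : A₁ ≤ᵐ[volume]
      (fun x : AddCircle (2 * Real.pi) => ((2*θ : ℝ) : AddCircle (2 * Real.pi)) +ᵥ x) ⁻¹' A₁ := by
    filter_upwards [hstep] with x hx hxA₁
    obtain ⟨hx1, hx2⟩ := hx
    have hxc : x + c ∈ A₂ := by
      have hmem : x + c ∈ A₁ ∪ A₂ := by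
        by_contra h; exact hx1 h
      rcases hmem with h | h
      · exact absurd (add_sub_cancel_left x c) (h₁ (x + c) h x hxA₁)
      · exact h
    have hxcc : x + c + c ∈ A₁ := by
      have hmem : x + c + c ∈ A₁ ∪ A₂ := by
        by_contra h; exact hx2 h
      rcases hmem with h | h
      · exact h
      · exact absurd (add_sub_cancel_left (x+c) c) (h₂ (x + c + c) h (x + c) hxc)
    show ((2*θ : ℝ) : AddCircle (2 * Real.pi)) +ᵥ x ∈ A₁
    rw [vadd_eq_add]
    have he : ((2*θ : ℝ) : AddCircle (2 * Real.pi)) + x = x + c + c := by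
      have h2 : ((2*θ : ℝ) : AddCircle (2 * Real.pi)) = c + c := by
        rw [hc, ← AddCircle.coe_add]
        congr 1
        ring
      rw [h2]; abel
    rw [he]; exact hxcc
  rcases herg.ae_empty_or_univ_of_ae_le_preimage' hA₁.nullMeasurableSet hle
      (measure_ne_top _ _) with h | h
  · -- A₁ null, so A₂ conull
    refine key A₂ ?_ h₂
    have hA1 : volume A₁ = 0 := MeasureTheory.ae_eq_empty.mp h
    refine le_antisymm ?_ (zero_le)
    calc volume A₂ᶜ ≤ volume ((A₁ ∪ A₂)ᶜ ∪ A₁) := by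
          refine measure_mono ?_
          intro x hx
          by_cases hxx : x ∈ A₁
          · exact Or.inr hxx
          · exact Or.inl (fun hmem => hmem.elim hxx hx)
      _ ≤ volume (A₁ ∪ A₂)ᶜ + volume A₁ := measure_union_le _ _
      _ = 0 := by rw [hfull, hA1]; simp
  · -- A₁ conull
    exact key A₁ (MeasureTheory.ae_eq_univ.mp h) h₁
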